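/- There is no ε-additive perturbation stable 2-means instance with ε > 1/2 in which both clusters contain at least 4 points. -/

import Mathlib

/-!
Let the two means differ by `D`. Take a point `a` of a cluster lying, along the unit direction `u`
towards the other mean, at least as far out as its own mean; push it by `εD·u` and push a second
point of the same cluster by `-εD·u`. No mean moves, yet `a` now lies at least `(ε - 1/2)D > 0`
beyond the bisector of the means, so handing it to the other cluster lowers the cost, contradicting
stability.
The case `D = 0` is excluded by uniqueness: merging two clusters with equal means costs nothing.
-/

open RealInnerProductSpace Finset

open Classical in
/-- The mean of cluster `j` in the clustering `c` of the points `x`. -/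
noncomputable def clusterMean {d n k : ℕ} (x : Fin n → EuclideanSpace ℝ (Fin d))
    (c : Fin n → Fin k) (j : Fin k) : EuclideanSpace ℝ (Fin d) :=
  (((Finset.univ.filter (fun i => c i = j)).card : ℝ))⁻¹ •
    ∑ i ∈ Finset.univ.filter (fun i => c i = j), x i

/-- The `k`-means cost of the clustering `c` of the points `x` (each cluster with its mean). -/
noncomputable def kmeansCost {d n k : ℕ} (x : Fin n → EuclideanSpace ℝ (Fin d))
    (c : Fin n → Fin k) : ℝ :=
  ∑ i, ‖x i - clusterMean x c (c i)‖ ^ 2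

/-- `c` is an optimal `k`-means clustering of `x`. -/
def IsOptimalClustering {d n k : ℕ} (x : Fin n → EuclideanSpace ℝ (Fin d))
    (c : Fin n → Fin k) : Prop :=
  ∀ c' : Fin n → Fin k, kmeansCost x c ≤ kmeansCost x c'

/-- `c` is the unique optimal clustering of `x` (up to relabeling of clusters). -/
def IsUniqueOptimalClustering {d n k : ℕ} (x : Fin n → EuclideanSpace ℝ (Fin d))
    (c : Fin n → Fin k) : Prop :=
  IsOptimalClustering x c ∧
    ∀ c' : Fin n → Fin k, IsOptimalClustering x c' → ∀ i j, (c' i = c' j ↔ c i = c j)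

/-- `x` with optimal clustering `c` is `ε`-additive perturbation stable with scale `D`:
after moving every point a distance at most `ε·D`, `c` remains an optimal clustering. -/
def IsAPS {d n k : ℕ} (ε D : ℝ) (x : Fin n → EuclideanSpace ℝ (Fin d))
    (c : Fin n → Fin k) : Prop :=
  ∀ x' : Fin n → EuclideanSpace ℝ (Fin d),
    (∀ i, ‖x' i - x i‖ ≤ ε * D) → IsOptimalClustering x' c

section InnerProductSpace

variable {ι E : Type*} [NormedAddCommGroup E] [InnerProductSpace ℝ E]

theorem sum_norm_sub_mean_sq_le (S : Finset ι) (y : ι → E) (z : E) :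
    ∑ i ∈ S, ‖y i - (#S : ℝ)⁻¹ • ∑ j ∈ S, y j‖ ^ 2 ≤ ∑ i ∈ S, ‖y i - z‖ ^ 2 := by
  rcases S.eq_empty_or_nonempty with rfl | hS
  · simp
  set μ : E := (#S : ℝ)⁻¹ • ∑ j ∈ S, y j
  have hcard : (#S : ℝ) ≠ 0 := Nat.cast_ne_zero.mpr hS.card_ne_zero
  have hbalanced : ∑ i ∈ S, (y i - μ) = 0 := by
    rw [sum_sub_distrib, sum_const, ← Nat.cast_smul_eq_nsmul ℝ, smul_smul,
      mul_inv_cancel₀ hcard, one_smul, sub_self]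
  have hsplit : ∀ i ∈ S, ‖y i - z‖ ^ 2 = ‖y i - μ‖ ^ 2 + 2 * ⟪y i - μ, μ - z⟫ + ‖μ - z‖ ^ 2 := by
    intro i _
    rw [← norm_add_sq_real, sub_add_sub_cancel]
  rw [sum_congr rfl hsplit, sum_add_distrib, sum_add_distrib, ← mul_sum, ← sum_inner,
    hbalanced, inner_zero_left, mul_zero, add_zero]
  exact le_add_of_nonneg_right (sum_nonneg fun _ _ => sq_nonneg _)

theorem exists_mem_inner_mean_le {S : Finset ι} (hS : S.Nonempty) (y : ι → E) (w : E) :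
    ∃ a ∈ S, ⟪w, (#S : ℝ)⁻¹ • ∑ j ∈ S, y j⟫ ≤ ⟪w, y a⟫ := by
  have hcard : (#S : ℝ) ≠ 0 := Nat.cast_ne_zero.mpr hS.card_ne_zero
  refine exists_le_of_sum_le hS (le_of_eq ?_)
  rw [sum_const, nsmul_eq_mul, real_inner_smul_right, mul_inv_cancel_left₀ hcard, inner_sum]

theorem norm_sub_lt_norm_sub_of_norm_sq_lt_two_mul_inner {p q y : E}
    (h : ‖q - p‖ ^ 2 < 2 * ⟪y - p, q - p⟫) : ‖y - q‖ < ‖y - p‖ := by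
  have hyq : ‖y - q‖ ^ 2 = ‖y - p‖ ^ 2 - 2 * ⟪y - p, q - p⟫ + ‖q - p‖ ^ 2 := by
    rw [← norm_sub_sq_real, sub_sub_sub_cancel_right]
  exact (pow_lt_pow_iff_left₀ (norm_nonneg _) (norm_nonneg _) two_ne_zero).mp (by linarith)

end InnerProductSpace

section KMeans

variable {d n k : ℕ}

theorem kmeansCost_le_sum_norm_sub_sq (x : Fin n → EuclideanSpace ℝ (Fin d)) (c : Fin n → Fin k)
    (z : Fin k → EuclideanSpace ℝ (Fin d)) : kmeansCost x c ≤ ∑ i, ‖x i - z (c i)‖ ^ 2 := by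
  unfold kmeansCost
  rw [← sum_fiberwise univ c, ← sum_fiberwise univ c (fun i => ‖x i - z (c i)‖ ^ 2)]
  refine sum_le_sum fun j _ => ?_
  have hfiber : ∀ f : Fin k → EuclideanSpace ℝ (Fin d),
      ∑ i ∈ univ.filter (c · = j), ‖x i - f (c i)‖ ^ 2
        = ∑ i ∈ univ.filter (c · = j), ‖x i - f j‖ ^ 2 :=
    fun f => sum_congr rfl fun i hi => by rw [(mem_filter.mp hi).2]
  rw [hfiber, hfiber]
  exact sum_norm_sub_mean_sq_le _ x (z j)

/-- Otherwise reassigning `a` to cluster `j` lowers the cost, even before the means are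
recomputed. -/
theorem IsOptimalClustering.norm_sub_clusterMean_le {x : Fin n → EuclideanSpace ℝ (Fin d)}
    {c : Fin n → Fin k} (hc : IsOptimalClustering x c) (a : Fin n) (j : Fin k) :
    ‖x a - clusterMean x c (c a)‖ ≤ ‖x a - clusterMean x c j‖ := by
  set μ := clusterMean x c
  have hupdate : (fun i => ‖x i - μ (Function.update c a j i)‖ ^ 2)
      = Function.update (fun i => ‖x i - μ (c i)‖ ^ 2) a (‖x a - μ j‖ ^ 2) := by
    funext i
    rcases eq_or_ne i a with rfl | hi <;> simp [*]
  have hcost := (hc _).trans (kmeansCost_le_sum_norm_sub_sq x (Function.update c a j) μ)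
  rw [hupdate, sum_update_of_mem (mem_univ a), kmeansCost,
    ← add_sum_erase _ _ (mem_univ a), erase_eq] at hcost
  exact (pow_le_pow_iff_left₀ (norm_nonneg _) (norm_nonneg _) two_ne_zero).mp (by linarith)

theorem IsUniqueOptimalClustering.clusterMean_ne {x : Fin n → EuclideanSpace ℝ (Fin d)}
    {c : Fin n → Fin k} (hc : IsUniqueOptimalClustering x c) {i i' : Fin n} (hii' : c i ≠ c i') :
    clusterMean x c (c i) ≠ clusterMean x c (c i') := by
  intro hμ
  let merged : Fin n → Fin k := fun l => if c l = c i' then c i else c l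
  have hmerged : IsOptimalClustering x merged := by
    intro c'
    refine le_trans ?_ (hc.1 c')
    refine (kmeansCost_le_sum_norm_sub_sq x merged (clusterMean x c)).trans
      (le_of_eq (sum_congr rfl fun l _ => ?_))
    by_cases hl : c l = c i' <;> simp [merged, hl, hμ]
  exact hii' ((hc.2 merged hmerged i i').mp (by simp [merged]))

theorem clusterMean_add_single_sub_single (x : Fin n → EuclideanSpace ℝ (Fin d))
    (c : Fin n → Fin k) {a b : Fin n} (hab : c a = c b) (v : EuclideanSpace ℝ (Fin d)) :
    clusterMean (x + Pi.single a v - Pi.single b v) c = clusterMean x c := by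
  funext j
  unfold clusterMean
  congr 1
  simp only [Pi.sub_apply, Pi.add_apply, sum_sub_distrib, sum_add_distrib, sum_pi_single',
    mem_filter, mem_univ, true_and, hab]
  simp

/-- Moving one point of cluster `j` by `εD` towards the mean of `j'`, and a second point of `j` by
`εD` the opposite way, keeps every mean in place, so stability keeps the first point on the side
of `j` of the bisector. -/
theorem IsAPS.two_mul_le_norm_sub_clusterMean {ε D : ℝ} {x : Fin n → EuclideanSpace ℝ (Fin d)}
    {c : Fin n → Fin k} (haps : IsAPS ε D x c) {j j' : Fin k}
    (hj : 2 ≤ #(univ.filter (fun i => c i = j)))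
    (hne : clusterMean x c j ≠ clusterMean x c j') :
    2 * ε * D ≤ ‖clusterMean x c j - clusterMean x c j'‖ := by
  set μ := clusterMean x c
  set δ := μ j' - μ j
  by_contra! hlt
  have hδ : 0 < ‖δ‖ := norm_sub_pos_iff.mpr hne.symm
  have hεD : 0 ≤ ε * D := by linarith [norm_nonneg (μ j - μ j')]
  obtain ⟨a, ha, hδa⟩ := exists_mem_inner_mean_le (card_pos.mp (two_pos.trans_le hj)) x δ
  obtain ⟨b, hb, hba⟩ := exists_mem_ne (one_lt_two.trans_le hj) a
  have hca : c a = j := (mem_filter.mp ha).2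
  set v := (ε * D / ‖δ‖) • δ
  have hv : ‖v‖ = ε * D := by
    rw [norm_smul, Real.norm_of_nonneg (div_nonneg hεD hδ.le), div_mul_cancel₀ _ hδ.ne']
  set x' := x + Pi.single a v - Pi.single b v
  have hmove : ∀ i, ‖x' i - x i‖ ≤ ε * D := by
    intro i
    rcases eq_or_ne i a with rfl | hia
    · simp [x', hba.symm, hv]
    rcases eq_or_ne i b with rfl | hib
    · simp [x', hia, hv]
    · simp [x', hia, hib, hεD]
  have hmean : clusterMean x' c = μ :=
    clusterMean_add_single_sub_single x c (hca.trans (mem_filter.mp hb).2.symm) v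
  have hstays := (haps x' hmove).norm_sub_clusterMean_le a j'
  rw [hmean, hca] at hstays
  have hxa : x' a = x a + v := by simp [x', hba.symm]
  have hcrosses : ‖x' a - μ j'‖ < ‖x' a - μ j‖ := by
    refine norm_sub_lt_norm_sub_of_norm_sq_lt_two_mul_inner (show ‖δ‖ ^ 2 < _ from ?_)
    have hinner : ⟪x' a - μ j, δ⟫ = ⟪δ, x a⟫ - ⟪δ, μ j⟫ + ε * D * ‖δ‖ := by
      rw [hxa, add_sub_right_comm, inner_add_left, inner_sub_left, real_inner_smul_left,
        real_inner_self_eq_norm_sq, real_inner_comm, real_inner_comm (μ j)]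
      field_simp
    have hδa : ⟪δ, μ j⟫ ≤ ⟪δ, x a⟫ := hδa
    rw [norm_sub_rev] at hlt
    nlinarith
  exact hcrosses.not_ge hstays

end KMeans

open Classical in
/-- There is no `ε`-additive perturbation stable 2-means instance with `ε > 1/2`
in which both clusters contain at least 4 points. -/
theorem no_aps_instance_of_large_epsilon {d n : ℕ} (ε : ℝ) (hε : 1 / 2 < ε)
    (x : Fin n → EuclideanSpace ℝ (Fin d)) (c : Fin n → Fin 2)
    (hsize : ∀ j : Fin 2, 4 ≤ (Finset.univ.filter (fun i => c i = j)).card)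
    (hopt : IsUniqueOptimalClustering x c)
    (haps : IsAPS ε ‖clusterMean x c 0 - clusterMean x c 1‖ x c) :
    False := by
  have hmember (j : Fin 2) : ∃ i, c i = j := by
    obtain ⟨i, hi⟩ := card_pos.mp (four_pos.trans_le (hsize j))
    exact ⟨i, (mem_filter.mp hi).2⟩
  obtain ⟨i₀, hi₀⟩ := hmember 0
  obtain ⟨i₁, hi₁⟩ := hmember 1
  have hne : clusterMean x c 0 ≠ clusterMean x c 1 := by
    simpa [hi₀, hi₁] using hopt.clusterMean_ne (i := i₀) (i' := i₁) (by simp [hi₀, hi₁])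
  have hD : 0 < ‖clusterMean x c 0 - clusterMean x c 1‖ := norm_sub_pos_iff.mpr hne
  have := haps.two_mul_le_norm_sub_clusterMean (by linarith [hsize 0]) hne
  nlinarith
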